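/- Let Z be a real m×c matrix with nonnegative entries, 𝓛 a real c×c matrix whose off-diagonal entries are nonpositive and whose row sums and column sums are all zero, and x* ∈ ℝ^m strictly positive. Define the Gibbs free energy G(x) = Σ_{i=1}^m ( x_i ln(x_i/x*_i) + x*_i − x_i ) for strictly positive x, and the vector field f(x) = −Z 𝓛 Exp(Zᵀ Ln(x/x*)). Then for every strictly positive x ∈ ℝ^m the directional derivative of G along f is nonpositive: (Ln(x/x*))ᵀ f(x) ≤ 0, with equality if and only if f(x) = 0, i.e. x is an equilibrium. -/

import Mathlib

/-!
Write `y = Zᵀ Ln(x/x*)`. Then `(Ln(x/x*))ᵀ f(x) = -yᵀ 𝓛 Exp(y)`, and since the rows and columns of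
`𝓛` sum to zero, `yᵀ 𝓛 Exp(y) = ∑ᵢⱼ (-𝓛ᵢⱼ) D(yᵢ, yⱼ)` where `D(a, b) = eᵃ - eᵇ (a - b + 1)` is the
Bregman divergence of `exp`. Both factors are nonnegative off the diagonal and `D(a, a) = 0`, so
the sum is nonnegative; it vanishes only if `yᵢ = yⱼ` whenever `𝓛ᵢⱼ ≠ 0`, and then the zero row
sums give `𝓛 Exp(y) = 0`.
-/

open Matrix

namespace Real

noncomputable def expBregman (a b : ℝ) : ℝ := exp a - exp b * (a - b + 1)

lemma expBregman_nonneg (a b : ℝ) : 0 ≤ expBregman a b := by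
  have h : exp b * (a - b + 1) ≤ exp b * exp (a - b) :=
    mul_le_mul_of_nonneg_left (add_one_le_exp _) (exp_pos b).le
  rw [← exp_add, add_sub_cancel] at h
  exact sub_nonneg.mpr h

lemma expBregman_eq_zero_iff {a b : ℝ} : expBregman a b = 0 ↔ a = b := by
  refine ⟨fun h => ?_, fun h => by simp [expBregman, h]⟩
  by_contra hab
  have h' : exp b * (a - b + 1) < exp b * exp (a - b) :=
    mul_lt_mul_of_pos_left (add_one_lt_exp (sub_ne_zero.mpr hab)) (exp_pos b)
  rw [← exp_add, add_sub_cancel] at h'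
  exact h'.ne' (sub_eq_zero.mp h)

end Real

open Real

section Laplacian

variable {ι : Type*} (L : Matrix ι ι ℝ)

lemma mul_expBregman_nonpos (hoff : ∀ i j, i ≠ j → L i j ≤ 0) (y : ι → ℝ) (i j : ι) :
    L i j * expBregman (y i) (y j) ≤ 0 := by
  rcases eq_or_ne i j with rfl | hij
  · simp [expBregman_eq_zero_iff.mpr rfl]
  · exact mul_nonpos_of_nonpos_of_nonneg (hoff i j hij) (expBregman_nonneg _ _)

variable [Fintype ι]

lemma dotProduct_mulVec_exp_eq_neg_sum_expBregman
    (hrow : ∀ i, ∑ j, L i j = 0) (hcol : ∀ j, ∑ i, L i j = 0) (y : ι → ℝ) :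
    y ⬝ᵥ L *ᵥ (fun i => exp (y i)) = -∑ i, ∑ j, L i j * expBregman (y i) (y j) := by
  have hrow' : ∑ i, ∑ j, L i j * exp (y i) = 0 := by
    simp only [← Finset.sum_mul, hrow, zero_mul, Finset.sum_const_zero]
  have hcol' : ∑ i, ∑ j, L i j * (exp (y j) * (1 - y j)) = 0 := by
    rw [Finset.sum_comm]
    simp only [← Finset.sum_mul, hcol, zero_mul, Finset.sum_const_zero]
  have hterm : ∀ i j, L i j * expBregman (y i) (y j) =
      L i j * exp (y i) - y i * (L i j * exp (y j)) - L i j * (exp (y j) * (1 - y j)) := by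
    intro i j; simp only [expBregman]; ring
  simp only [hterm, Finset.sum_sub_distrib, hrow', hcol', dotProduct, mulVec, Finset.mul_sum]
  ring

lemma dotProduct_mulVec_exp_nonneg (hoff : ∀ i j, i ≠ j → L i j ≤ 0)
    (hrow : ∀ i, ∑ j, L i j = 0) (hcol : ∀ j, ∑ i, L i j = 0) (y : ι → ℝ) :
    0 ≤ y ⬝ᵥ L *ᵥ (fun i => exp (y i)) := by
  rw [dotProduct_mulVec_exp_eq_neg_sum_expBregman L hrow hcol, neg_nonneg]
  exact Finset.sum_nonpos fun i _ => Finset.sum_nonpos fun j _ => mul_expBregman_nonpos L hoff y i j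

lemma mulVec_exp_eq_zero_of_eq_of_ne_zero (hrow : ∀ i, ∑ j, L i j = 0) (y : ι → ℝ)
    (hy : ∀ i j, L i j ≠ 0 → y i = y j) : L *ᵥ (fun i => exp (y i)) = 0 := by
  funext i
  have hcongr : ∀ j, L i j * exp (y j) = L i j * exp (y i) := by
    intro j
    rcases eq_or_ne (L i j) 0 with h | h
    · simp [h]
    · rw [hy i j h]
  simp only [mulVec, dotProduct, hcongr, ← Finset.sum_mul, hrow, zero_mul, Pi.zero_apply]

lemma mulVec_exp_eq_zero_of_dotProduct_eq_zero (hoff : ∀ i j, i ≠ j → L i j ≤ 0)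
    (hrow : ∀ i, ∑ j, L i j = 0) (hcol : ∀ j, ∑ i, L i j = 0) (y : ι → ℝ)
    (h : y ⬝ᵥ L *ᵥ (fun i => exp (y i)) = 0) : L *ᵥ (fun i => exp (y i)) = 0 := by
  rw [dotProduct_mulVec_exp_eq_neg_sum_expBregman L hrow hcol, neg_eq_zero] at h
  have hzero : ∀ i j, L i j * expBregman (y i) (y j) = 0 := by
    intro i j
    have hrow_zero := (Finset.sum_eq_zero_iff_of_nonpos fun i _ =>
      Finset.sum_nonpos fun j _ => mul_expBregman_nonpos L hoff y i j).mp h i (Finset.mem_univ _)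
    exact (Finset.sum_eq_zero_iff_of_nonpos fun j _ =>
      mul_expBregman_nonpos L hoff y i j).mp hrow_zero j (Finset.mem_univ _)
  refine mulVec_exp_eq_zero_of_eq_of_ne_zero L hrow y fun i j hL => ?_
  exact expBregman_eq_zero_iff.mp ((mul_eq_zero.mp (hzero i j)).resolve_left hL)

end Laplacian

theorem stmt_13_general (m c : ℕ) (Z : Matrix (Fin m) (Fin c) ℝ)
    (L : Matrix (Fin c) (Fin c) ℝ)
    (hoff : ∀ i j, i ≠ j → L i j ≤ 0)
    (hrow : ∀ i, ∑ j, L i j = 0)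
    (hcol : ∀ j, ∑ i, L i j = 0)
    (xs : Fin m → ℝ)
    (x : Fin m → ℝ) :
    (fun k => Real.log (x k / xs k)) ⬝ᵥ
      (-(Z.mulVec (L.mulVec (fun i =>
          Real.exp (Zᵀ.mulVec (fun k => Real.log (x k / xs k)) i))))) ≤ 0 ∧
    ((fun k => Real.log (x k / xs k)) ⬝ᵥ
      (-(Z.mulVec (L.mulVec (fun i =>
          Real.exp (Zᵀ.mulVec (fun k => Real.log (x k / xs k)) i))))) = 0 ↔
      -(Z.mulVec (L.mulVec (fun i =>
          Real.exp (Zᵀ.mulVec (fun k => Real.log (x k / xs k)) i)))) = 0) := by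
  set μ : Fin m → ℝ := fun k => Real.log (x k / xs k)
  set y : Fin c → ℝ := Zᵀ *ᵥ μ with hy
  have hdot : μ ⬝ᵥ -(Z *ᵥ L *ᵥ fun i => exp (y i)) = -(y ⬝ᵥ L *ᵥ fun i => exp (y i)) := by
    rw [dotProduct_neg, dotProduct_mulVec, hy, mulVec_transpose]
  refine ⟨?_, ⟨fun h => ?_, fun h => by rw [h, dotProduct_zero]⟩⟩
  · rw [hdot, neg_nonpos]
    exact dotProduct_mulVec_exp_nonneg L hoff hrow hcol y
  · rw [hdot, neg_eq_zero] at h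
    rw [mulVec_exp_eq_zero_of_dotProduct_eq_zero L hoff hrow hcol y h, mulVec_zero, neg_zero]

/-- Lyapunov property of the Gibbs free energy
`G(x) = Σᵢ (xᵢ ln(xᵢ/x*ᵢ) + x*ᵢ − xᵢ)`: along the complex-balanced dynamics
`f(x) = −Z 𝓛 Exp(Zᵀ Ln(x/x*))`, the directional derivative `(Ln(x/x*))ᵀ f(x)` is
nonpositive, and vanishes iff `f(x) = 0`, i.e. `x` is an equilibrium. -/
theorem stmt_13 (m c : ℕ) (Z : Matrix (Fin m) (Fin c) ℝ) (hZ : ∀ k i, 0 ≤ Z k i)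
    (L : Matrix (Fin c) (Fin c) ℝ)
    (hoff : ∀ i j, i ≠ j → L i j ≤ 0)
    (hrow : ∀ i, ∑ j, L i j = 0)
    (hcol : ∀ j, ∑ i, L i j = 0)
    (xs : Fin m → ℝ) (hxs : ∀ k, 0 < xs k)
    (x : Fin m → ℝ) (hx : ∀ k, 0 < x k) :
    (fun k => Real.log (x k / xs k)) ⬝ᵥ
      (-(Z.mulVec (L.mulVec (fun i =>
          Real.exp (Zᵀ.mulVec (fun k => Real.log (x k / xs k)) i))))) ≤ 0 ∧
    ((fun k => Real.log (x k / xs k)) ⬝ᵥ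
      (-(Z.mulVec (L.mulVec (fun i =>
          Real.exp (Zᵀ.mulVec (fun k => Real.log (x k / xs k)) i))))) = 0 ↔
      -(Z.mulVec (L.mulVec (fun i =>
          Real.exp (Zᵀ.mulVec (fun k => Real.log (x k / xs k)) i)))) = 0) :=
  stmt_13_general m c Z L hoff hrow hcol xs x
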